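/- Pivot-counting lemma (the combinatorial core of the Finding Pivots lemma): assume the uniqueness assumption holds. Let d̂ be an estimate function, S a finite set of vertices, B ∈ ℝ≥0∞, and k ≥ 1 a natural number. Assume that for every vertex v with d̂(v) ≠ d(v) and d(v) < B there exists a complete vertex u ∈ S such that the shortest path to v visits u. Let Ũ := {v : d(v) < B and there exists u ∈ S such that the shortest path to v visits u}. Then there exists a function r : Ũ → S such that: (i) for each x ∈ Ũ, r(x) is complete and the shortest path to x visits r(x); (ii) letting P := {y ∈ S : the set {x ∈ Ũ : r(x) = y} has at least k elements}, we have k · |P| ≤ |Ũ|; (iii) for every x ∈ Ũ, either r(x) ∈ P, or the set {w ∈ V : the shortest path to w visits r(x) and the shortest path to x visits w} has at most k elements. -/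

import Mathlib

/-!
Let `Good x` be the complete vertices of `S` visited by the shortest path to `x`, and let
`r x` be the largest element of `Good x` for an arbitrary fixed linear order on `V`. The
hypothesis on `d̂` makes `Good x` nonempty for every `x ∈ Ũ`. If the shortest path to `x`
visits `z` and the shortest path to `z` visits `r x`, then `Good z ⊆ Good x` (visiting is
transitive by the triangle inequality) and `r x ∈ Good z`, so `r z = r x`: the whole segment
between `r x` and `x` lies in the fiber of `r x`, which has fewer than `k` elements unless
`r x ∈ P`. The bound `k * |P| ≤ |Ũ|` holds because the fibers over `P` are disjoint subsets
of `Ũ`.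
-/

open scoped ENNReal

namespace SSSP

variable {V : Type*}

/-- The weight of a walk (a list of vertices): the sum of `w` over consecutive pairs.
A one-vertex walk has weight 0. -/
noncomputable def walkWeight (w : V → V → ℝ≥0∞) : List V → ℝ≥0∞
  | [] => 0
  | [_] => 0
  | a :: b :: p => w a b + walkWeight w (b :: p)

/-- `p` is a walk from `u` to `v`: a nonempty list beginning at `u` and ending at `v`. -/
def IsWalk (u v : V) (p : List V) : Prop :=
  p ≠ [] ∧ p.head? = some u ∧ p.getLast? = some v

/-- The distance from `u` to `v`: the infimum of the weights of all walks from `u` to `v`. -/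
noncomputable def dist (w : V → V → ℝ≥0∞) (u v : V) : ℝ≥0∞ :=
  ⨅ p : {p : List V // IsWalk u v p}, walkWeight w p.1

/-- The shortest path (from `s`) to `v` visits `u`. -/
def Visits (w : V → V → ℝ≥0∞) (s u v : V) : Prop :=
  dist w s u + dist w u v = dist w s v

/-- The uniqueness assumption: any two distinct walks starting from `s` with finite
weight have different weights. -/
def UniqueWeights (w : V → V → ℝ≥0∞) (s : V) : Prop :=
  ∀ p q : List V, p ≠ [] → q ≠ [] → p.head? = some s → q.head? = some s →
    walkWeight w p ≠ ⊤ → walkWeight w q ≠ ⊤ → walkWeight w p = walkWeight w q → p = q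

/-- The relaxation operator. -/
noncomputable def relax (w : V → V → ℝ≥0∞) (f : V → ℝ≥0∞) : V → ℝ≥0∞ :=
  fun v => min (f v) (⨅ u, f u + w u v)

lemma walkWeight_append_cons (w : V → V → ℝ≥0∞) (p : List V) (v : V) (q : List V) :
    walkWeight w (p ++ v :: q) = walkWeight w (p ++ [v]) + walkWeight w (v :: q) := by
  induction p with
  | nil => cases q <;> simp [walkWeight]
  | cons a p ih =>
    cases p with
    | nil => cases q <;> simp [walkWeight]
    | cons b p => simp only [List.cons_append, walkWeight] at *; rw [ih, add_assoc]

lemma IsWalk.exists_eq_cons {u v : V} {p : List V} (h : IsWalk u v p) : ∃ q, p = u :: q := by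
  obtain ⟨hne, hhead, -⟩ := h
  cases p with
  | nil => exact absurd rfl hne
  | cons a q => exact ⟨q, by simpa using hhead⟩

lemma IsWalk.exists_eq_append_singleton {u v : V} {p : List V} (h : IsWalk u v p) :
    ∃ q, p = q ++ [v] :=
  ⟨p.dropLast, (List.dropLast_append_getLast? v h.2.2).symm⟩

lemma IsWalk.append_cons {a b c : V} {p q : List V} (hp : IsWalk a b (p ++ [b]))
    (hq : IsWalk b c (b :: q)) : IsWalk a c (p ++ b :: q) :=
  ⟨by simp, by simpa [List.head?_append] using hp.2.1,
    by simpa [List.getLast?_append] using hq.2.2⟩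

lemma dist_le_walkWeight (w : V → V → ℝ≥0∞) {u v : V} {p : List V} (h : IsWalk u v p) :
    dist w u v ≤ walkWeight w p :=
  iInf_le (fun p : {p : List V // IsWalk u v p} => walkWeight w p.1) ⟨p, h⟩

lemma dist_triangle (w : V → V → ℝ≥0∞) (a b c : V) :
    dist w a c ≤ dist w a b + dist w b c := by
  unfold dist
  rw [ENNReal.iInf_add]
  refine le_iInf fun ⟨p, hp⟩ => ?_
  rw [ENNReal.add_iInf]
  refine le_iInf fun ⟨q, hq⟩ => ?_
  obtain ⟨p, rfl⟩ := hp.exists_eq_append_singleton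
  obtain ⟨q, rfl⟩ := hq.exists_eq_cons
  rw [← walkWeight_append_cons]
  exact dist_le_walkWeight w (hp.append_cons hq)

lemma Visits.dist_le {w : V → V → ℝ≥0∞} {s u v : V} (h : Visits w s u v) :
    dist w s u ≤ dist w s v :=
  h ▸ le_self_add

lemma Visits.trans {w : V → V → ℝ≥0∞} {s u z x : V} (h₁ : Visits w s u z)
    (h₂ : Visits w s z x) : Visits w s u x := by
  refine le_antisymm ?_ (h₂ ▸ dist_triangle w s u x)
  calc dist w s u + dist w u x
      ≤ dist w s u + (dist w u z + dist w z x) := by gcongr; exact dist_triangle w u z x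
    _ = dist w s x := by rw [← add_assoc, h₁, h₂]

lemma _root_.Set.mul_ncard_heavy_fibers_le_ncard {α β : Type*} [Finite α] (U : Set α)
    (r : α → β) (T : Set β) (k : ℕ) :
    k * {y ∈ T | k ≤ {x ∈ U | r x = y}.ncard}.ncard ≤ U.ncard := by
  classical
  rcases Nat.eq_zero_or_pos k with rfl | hk
  · simp
  have := Fintype.ofFinite α
  set P := {y ∈ T | k ≤ {x ∈ U | r x = y}.ncard}
  have hP : P.Finite := (Set.finite_range r).subset fun y hy => by
    obtain ⟨x, hx, rfl⟩ := Set.nonempty_of_ncard_ne_zero (s := {x ∈ U | r x = y})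
      (by have := hy.2; omega)
    exact ⟨x, rfl⟩
  calc k * P.ncard = k * hP.toFinset.card := by rw [Set.ncard_eq_toFinset_card P hP]
    _ ≤ (U ∩ r ⁻¹' P).toFinset.card := by
      refine Finset.mul_card_image_le_card_of_maps_to (f := r) (by simp) k fun y hy => ?_
      rw [hP.mem_toFinset] at hy
      convert hy.2 using 1
      rw [Set.ncard_eq_toFinset_card']
      congr 1
      ext x
      simp only [Finset.mem_filter, Set.mem_toFinset, Set.mem_inter_iff, Set.mem_preimage]
      grind
    _ = (U ∩ r ⁻¹' P).ncard := (Set.ncard_eq_toFinset_card' _).symm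
    _ ≤ U.ncard := Set.ncard_le_ncard Set.inter_subset_left

lemma _root_.Finset.max'_eq_of_subset {α : Type*} [LinearOrder α] {s t : Finset α}
    (hs : s.Nonempty) (hst : s ⊆ t) (h : t.max' (hs.mono hst) ∈ s) :
    s.max' hs = t.max' (hs.mono hst) :=
  le_antisymm (s.max'_subset hs hst) (s.le_max' _ h)

section Pivots

variable [Fintype V] {w : V → V → ℝ≥0∞} {s : V} {dhat : V → ℝ≥0∞} {S : Set V} {x z : V}

variable (w s dhat S) in
open Classical in
noncomputable def completeVisitors (x : V) : Finset V :=
  {u | u ∈ S ∧ dhat u = dist w s u ∧ Visits w s u x}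

@[simp]
lemma mem_completeVisitors {u : V} :
    u ∈ completeVisitors w s dhat S x ↔ u ∈ S ∧ dhat u = dist w s u ∧ Visits w s u x := by
  simp [completeVisitors]

lemma completeVisitors_mono (h : Visits w s z x) :
    completeVisitors w s dhat S z ⊆ completeVisitors w s dhat S x := fun u hu => by
  simp only [mem_completeVisitors] at hu ⊢
  exact ⟨hu.1, hu.2.1, hu.2.2.trans h⟩

lemma completeVisitors_nonempty {B : ℝ≥0∞}
    (hS : ∀ v, dhat v ≠ dist w s v → dist w s v < B →
      ∃ u ∈ S, dhat u = dist w s u ∧ Visits w s u v)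
    (hx : dist w s x < B) {u : V} (hu : u ∈ S) (hux : Visits w s u x) :
    (completeVisitors w s dhat S x).Nonempty := by
  by_cases hcomplete : dhat u = dist w s u
  · exact ⟨u, mem_completeVisitors.2 ⟨hu, hcomplete, hux⟩⟩
  · obtain ⟨u', hu', hcomplete', hu'u⟩ := hS u hcomplete (hux.dist_le.trans_lt hx)
    exact ⟨u', mem_completeVisitors.2 ⟨hu', hcomplete', hu'u.trans hux⟩⟩

variable (w s dhat S) in
noncomputable def pivot [LinearOrder V] (x : V) : V :=
  if h : (completeVisitors w s dhat S x).Nonempty then (completeVisitors w s dhat S x).max' h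
  else x

variable [LinearOrder V]

lemma pivot_eq_max' (h : (completeVisitors w s dhat S x).Nonempty) :
    pivot w s dhat S x = (completeVisitors w s dhat S x).max' h :=
  dif_pos h

lemma pivot_mem_completeVisitors (h : (completeVisitors w s dhat S x).Nonempty) :
    pivot w s dhat S x ∈ completeVisitors w s dhat S x :=
  pivot_eq_max' h ▸ Finset.max'_mem _ h

lemma pivot_eq_of_visits (hx : (completeVisitors w s dhat S x).Nonempty)
    (h₁ : Visits w s (pivot w s dhat S x) z) (h₂ : Visits w s z x) :
    pivot w s dhat S z = pivot w s dhat S x := by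
  have hpivot_mem := mem_completeVisitors.1 (pivot_mem_completeVisitors hx)
  have hmem : pivot w s dhat S x ∈ completeVisitors w s dhat S z :=
    mem_completeVisitors.2 ⟨hpivot_mem.1, hpivot_mem.2.1, h₁⟩
  have hz : (completeVisitors w s dhat S z).Nonempty := ⟨_, hmem⟩
  rw [pivot_eq_max' hx] at hmem ⊢
  rw [pivot_eq_max' hz]
  exact Finset.max'_eq_of_subset hz (completeVisitors_mono h₂) hmem

end Pivots

end SSSP

namespace SSSP

theorem pivot_counting_general {V : Type*} [Fintype V] (w : V → V → ℝ≥0∞) (s : V)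
    (dhat : V → ℝ≥0∞)
    (S : Set V) (B : ℝ≥0∞) (k : ℕ)
    (hS : ∀ v, dhat v ≠ dist w s v → dist w s v < B →
      ∃ u ∈ S, dhat u = dist w s u ∧ Visits w s u v) :
    ∃ r : V → V,
      (∀ x ∈ {v | dist w s v < B ∧ ∃ u ∈ S, Visits w s u v}, r x ∈ S) ∧
      (∀ x ∈ {v | dist w s v < B ∧ ∃ u ∈ S, Visits w s u v},
        dhat (r x) = dist w s (r x) ∧ Visits w s (r x) x) ∧
      k * ({y ∈ S | k ≤ ({x ∈ {v | dist w s v < B ∧ ∃ u ∈ S, Visits w s u v} |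
              r x = y}).ncard}).ncard
        ≤ ({v | dist w s v < B ∧ ∃ u ∈ S, Visits w s u v}).ncard ∧
      (∀ x ∈ {v | dist w s v < B ∧ ∃ u ∈ S, Visits w s u v},
        r x ∈ {y ∈ S | k ≤ ({x ∈ {v | dist w s v < B ∧ ∃ u ∈ S, Visits w s u v} |
              r x = y}).ncard} ∨
        ({z : V | Visits w s (r x) z ∧ Visits w s z x}).ncard ≤ k) := by
  let _ : LinearOrder V := LinearOrder.lift' _ (Fintype.equivFin V).injective
  have hne : ∀ x ∈ {v | dist w s v < B ∧ ∃ u ∈ S, Visits w s u v},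
      (completeVisitors w s dhat S x).Nonempty := fun x ⟨hx, _, hu, hux⟩ =>
    completeVisitors_nonempty hS hx hu hux
  have hpivot x hx := mem_completeVisitors.1 (pivot_mem_completeVisitors (hne x hx))
  refine ⟨pivot w s dhat S, fun x hx => (hpivot x hx).1, fun x hx => (hpivot x hx).2,
    Set.mul_ncard_heavy_fibers_le_ncard _ _ _ _, fun x hx => ?_⟩
  by_cases heavy : k ≤ ({x' ∈ {v | dist w s v < B ∧ ∃ u ∈ S, Visits w s u v} |
      pivot w s dhat S x' = pivot w s dhat S x}).ncard
  · exact Or.inl ⟨(hpivot x hx).1, heavy⟩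
  refine Or.inr ((Set.ncard_le_ncard ?_ (Set.toFinite _)).trans (not_le.1 heavy).le)
  rintro z ⟨h₁, h₂⟩
  exact ⟨⟨h₂.dist_le.trans_lt hx.1, _, (hpivot x hx).1, h₁⟩, pivot_eq_of_visits (hne x hx) h₁ h₂⟩

/-- Pivot-counting lemma: the combinatorial core of the Finding Pivots lemma. -/
theorem pivot_counting {V : Type*} [Fintype V] (w : V → V → ℝ≥0∞) (s : V)
    (huniq : UniqueWeights w s)
    (dhat : V → ℝ≥0∞) (hest : ∀ v, dist w s v ≤ dhat v)
    (S : Set V) (B : ℝ≥0∞) (k : ℕ) (hk : 1 ≤ k)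
    (hS : ∀ v, dhat v ≠ dist w s v → dist w s v < B →
      ∃ u ∈ S, dhat u = dist w s u ∧ Visits w s u v) :
    ∃ r : V → V,
      (∀ x ∈ {v | dist w s v < B ∧ ∃ u ∈ S, Visits w s u v}, r x ∈ S) ∧
      (∀ x ∈ {v | dist w s v < B ∧ ∃ u ∈ S, Visits w s u v},
        dhat (r x) = dist w s (r x) ∧ Visits w s (r x) x) ∧
      k * ({y ∈ S | k ≤ ({x ∈ {v | dist w s v < B ∧ ∃ u ∈ S, Visits w s u v} |
              r x = y}).ncard}).ncard
        ≤ ({v | dist w s v < B ∧ ∃ u ∈ S, Visits w s u v}).ncard ∧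
      (∀ x ∈ {v | dist w s v < B ∧ ∃ u ∈ S, Visits w s u v},
        r x ∈ {y ∈ S | k ≤ ({x ∈ {v | dist w s v < B ∧ ∃ u ∈ S, Visits w s u v} |
              r x = y}).ncard} ∨
        ({z : V | Visits w s (r x) z ∧ Visits w s z x}).ncard ≤ k) :=
  pivot_counting_general w s dhat S B k hS

end SSSP
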